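/- arXiv:1606.01605 — 2 statements merged into one kernel-verified Lean document; each statement's English description precedes it below -/
import Mathlib

section
/- Let n be a positive integer and let S = (x_1)(x_2)(x_3)(x_4) be a minimal zero-sum sequence over Z/n with ind(S) = 2. Suppose d = gcd(n, x_1, x_2, x_3, x_4) > 1, and let m = n/d. Then S' = (x_1/d)(x_2/d)(x_3/d)(x_4/d) is a minimal zero-sum sequence over Z/m with ind(S') = 2. -/
/-!
Every representative `rep n (x i)` is divisible by `d`, so `x = d • y` with `y` the descended
sequence over `ZMod m`, `n = d * m`. Multiplication by `d` is an injective homomorphism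
`ZMod m → ZMod n`, so the zero-sum subsequences of `x` and `y` are the same. For a unit `g` of
`ZMod n` it also sends the representative in `[1, m]` of `ḡ⁻¹ yᵢ` to the representative in
`[d, n]` of `g⁻¹ xᵢ`, so `‖x‖_g = ‖y‖_ḡ`; since the units of `ZMod n` reduce onto the units of
`ZMod m`, the two sequences have the same sets of norms and hence the same index.
-/

open Finset

/-- The representative of `z : ZMod n` in `{1, ..., n}`. -/
def rep (n : ℕ) (z : ZMod n) : ℕ := if z = 0 then n else z.val

/-- `g` is a generator of the additive group `ZMod n`. -/
def IsAddGenerator (n : ℕ) (g : ZMod n) : Prop := AddSubgroup.zmultiples g = ⊤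

/-- `x` is a minimal zero-sum sequence of length 4 over `ZMod n`:
it is a zero-sum sequence, but no proper nontrivial subsequence of it has sum zero. -/
def IsMinZeroSum4 (n : ℕ) (x : Fin 4 → ZMod n) : Prop :=
  (∑ i, x i) = 0 ∧
    ∀ T : Finset (Fin 4), T ≠ ∅ → T ≠ Finset.univ → (∑ i ∈ T, x i) ≠ 0

/-- The `g`-norm `‖S‖_g = (y₁ + ⋯ + y₄)/n` where `S = (y₁ g)⋯(y₄ g)`, `1 ≤ yᵢ ≤ n`. -/
noncomputable def gNorm (n : ℕ) (g : ZMod n) (x : Fin 4 → ZMod n) : ℝ :=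
  (∑ i, (rep n (g⁻¹ * x i) : ℝ)) / n

/-- The index of the sequence `x`: the minimum of the `g`-norms over generators `g`. -/
noncomputable def seqIndex (n : ℕ) (x : Fin 4 → ZMod n) : ℝ :=
  sInf {r : ℝ | ∃ g : ZMod n, IsAddGenerator n g ∧ r = gNorm n g x}

section Rep

variable {n : ℕ}

lemma rep_natCast {s : ℕ} (hs₀ : 0 < s) (hs : s ≤ n) : rep n (s : ZMod n) = s := by
  unfold rep
  split_ifs with h
  · exact le_antisymm (Nat.le_of_dvd hs₀ ((ZMod.natCast_eq_zero_iff s n).mp h)) hs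
  · exact ZMod.val_cast_of_lt (lt_of_le_of_ne hs fun h' => h (by simp [h']))

variable [NeZero n]

lemma natCast_rep (z : ZMod n) : (rep n z : ZMod n) = z := by
  unfold rep
  split_ifs with h <;> simp [h]

lemma rep_pos (z : ZMod n) : 0 < rep n z := by
  unfold rep
  split_ifs with h
  · exact Nat.pos_of_neZero n
  · exact Nat.pos_of_ne_zero fun h' => h ((ZMod.val_eq_zero z).mp h')

lemma rep_le (z : ZMod n) : rep n z ≤ n := by
  unfold rep
  split_ifs
  · exact le_rfl
  · exact (ZMod.val_lt z).le

end Rep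

lemma isAddGenerator_iff_isUnit {n : ℕ} (g : ZMod n) : IsAddGenerator n g ↔ IsUnit g := by
  constructor
  · intro h
    obtain ⟨k, hk⟩ := AddSubgroup.mem_zmultiples_iff.mp (h ▸ AddSubgroup.mem_top (1 : ZMod n))
    rw [zsmul_eq_mul] at hk
    exact IsUnit.of_mul_eq_one_right _ hk
  · intro hg
    refine eq_top_iff.mpr fun a _ => AddSubgroup.mem_zmultiples_iff.mpr ⟨(a * g⁻¹).cast, ?_⟩
    rw [zsmul_eq_mul, ZMod.intCast_cast, ZMod.cast_id, mul_assoc, ZMod.inv_mul_of_unit g hg,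
      mul_one]

lemma ZMod.cast_inv_of_isUnit {m n : ℕ} (h : m ∣ n) {g : ZMod n} (hg : IsUnit g) :
    (g⁻¹.cast : ZMod m) = (g.cast : ZMod m)⁻¹ := by
  refine (ZMod.inv_eq_of_mul_eq_one _ _ _ ?_).symm
  rw [← ZMod.cast_mul h, ZMod.mul_inv_of_unit g hg, ZMod.cast_one h]

section Descent

variable {d m : ℕ} [NeZero d]

lemma natCast_mul_eq_zero_iff (a : ℕ) :
    ((d * a : ℕ) : ZMod (d * m)) = 0 ↔ (a : ZMod m) = 0 := by
  simp only [ZMod.natCast_eq_zero_iff, Nat.mul_dvd_mul_iff_left (Nat.pos_of_neZero d)]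

lemma isMinZeroSum4_natCast_mul_iff (a : Fin 4 → ℕ) :
    IsMinZeroSum4 (d * m) (fun i => ((d * a i : ℕ) : ZMod (d * m))) ↔
      IsMinZeroSum4 m (fun i => (a i : ZMod m)) := by
  have hsum : ∀ T : Finset (Fin 4),
      ∑ i ∈ T, ((d * a i : ℕ) : ZMod (d * m)) = 0 ↔ ∑ i ∈ T, (a i : ZMod m) = 0 := by
    intro T
    rw [← Nat.cast_sum, ← mul_sum, natCast_mul_eq_zero_iff, Nat.cast_sum]
  unfold IsMinZeroSum4
  simp only [ne_eq, hsum]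

variable [NeZero m]

lemma rep_mul_natCast_mul (w : ZMod (d * m)) (a : ℕ) :
    rep (d * m) (w * ((d * a : ℕ) : ZMod (d * m))) = d * rep m (w.cast * a) := by
  set r := rep m (w.cast * a)
  have hr : r ≡ w.val * a [MOD m] := by
    rw [← ZMod.natCast_eq_natCast_iff]
    push_cast
    rw [natCast_rep, ZMod.cast_eq_val]
  have hdr : ((d * r : ℕ) : ZMod (d * m)) = w * ((d * a : ℕ) : ZMod (d * m)) := by
    rw [(ZMod.natCast_eq_natCast_iff _ _ _).mpr (hr.mul_left' d)]
    push_cast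
    rw [ZMod.natCast_zmod_val]
    ring
  rw [← hdr, rep_natCast (Nat.mul_pos (Nat.pos_of_neZero d) (rep_pos _))
    (Nat.mul_le_mul_left d (rep_le _))]

lemma gNorm_natCast_mul {g : ZMod (d * m)} (hg : IsUnit g) (a : Fin 4 → ℕ) :
    gNorm (d * m) g (fun i => ((d * a i : ℕ) : ZMod (d * m))) =
      gNorm m g.cast (fun i => (a i : ZMod m)) := by
  have hd : (d : ℝ) ≠ 0 := Nat.cast_ne_zero.mpr (NeZero.ne d)
  unfold gNorm
  simp only [rep_mul_natCast_mul, ZMod.cast_inv_of_isUnit (dvd_mul_left m d) hg]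
  push_cast
  rw [← mul_sum, mul_div_mul_left _ _ hd]

lemma seqIndex_natCast_mul (a : Fin 4 → ℕ) :
    seqIndex (d * m) (fun i => ((d * a i : ℕ) : ZMod (d * m))) =
      seqIndex m (fun i => (a i : ZMod m)) := by
  unfold seqIndex
  congr 1
  ext r
  simp only [Set.mem_ofPred_eq, isAddGenerator_iff_isUnit]
  constructor
  · rintro ⟨g, hg, rfl⟩
    exact ⟨g.cast, hg.map (ZMod.castHom (dvd_mul_left m d) (ZMod m)), gNorm_natCast_mul hg a⟩
  · rintro ⟨h, hh, rfl⟩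
    obtain ⟨U, hU⟩ := ZMod.unitsMap_surjective (dvd_mul_left m d) hh.unit
    refine ⟨U, U.isUnit, ?_⟩
    rw [gNorm_natCast_mul U.isUnit, ← ZMod.unitsMap_val (dvd_mul_left m d), hU, IsUnit.unit_spec]

end Descent

theorem descend_counterexample_general (n : ℕ) (hn : 0 < n) (x : Fin 4 → ZMod n)
    (hx : IsMinZeroSum4 n x) (hind : seqIndex n x = 2) (d : ℕ)
    (hd : d = Nat.gcd (Nat.gcd (Nat.gcd (Nat.gcd n (rep n (x 0))) (rep n (x 1)))
      (rep n (x 2))) (rep n (x 3)))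
    (m : ℕ) (hm : m = n / d) :
    IsMinZeroSum4 m (fun i => ((rep n (x i) / d : ℕ) : ZMod m)) ∧
      seqIndex m (fun i => ((rep n (x i) / d : ℕ) : ZMod m)) = 2 := by
  have : NeZero n := ⟨hn.ne'⟩
  have hdvd := dvd_refl d
  nth_rw 2 [hd] at hdvd
  simp only [Nat.dvd_gcd_iff] at hdvd
  obtain ⟨⟨⟨⟨hdn, h0⟩, h1⟩, h2⟩, h3⟩ := hdvd
  have hdx : ∀ i, d ∣ rep n (x i) := by
    intro i
    fin_cases i <;> assumption
  have hnm : n = d * m := by rw [hm, Nat.mul_div_cancel' hdn]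
  have : NeZero d := ⟨fun h => hn.ne' (by simpa [h] using hnm)⟩
  have : NeZero m := ⟨fun h => hn.ne' (by simpa [h] using hnm)⟩
  set a : Fin 4 → ℕ := fun i => rep n (x i) / d
  have hxa : x = fun i => ((d * a i : ℕ) : ZMod n) := by
    funext i
    rw [Nat.mul_div_cancel' (hdx i), natCast_rep (x i)]
  rw [hxa] at hx hind
  subst hnm
  exact ⟨(isMinZeroSum4_natCast_mul_iff (d := d) (m := m) a).mp hx,
    seqIndex_natCast_mul (d := d) (m := m) a ▸ hind⟩

/-- If `S = (x₁)(x₂)(x₃)(x₄)` is a minimal zero-sum sequence over `ZMod n` with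
`ind(S) = 2` and `d = gcd(n, x₁, x₂, x₃, x₄) > 1`, then with `m = n/d` the sequence
`S' = (x₁/d)(x₂/d)(x₃/d)(x₄/d)` over `ZMod m` is a minimal zero-sum sequence
with `ind(S') = 2`. -/
theorem descend_counterexample (n : ℕ) (hn : 0 < n) (x : Fin 4 → ZMod n)
    (hx : IsMinZeroSum4 n x) (hind : seqIndex n x = 2) (d : ℕ)
    (hd : d = Nat.gcd (Nat.gcd (Nat.gcd (Nat.gcd n (rep n (x 0))) (rep n (x 1)))
      (rep n (x 2))) (rep n (x 3)))
    (hd1 : 1 < d) (m : ℕ) (hm : m = n / d) :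
    IsMinZeroSum4 m (fun i => ((rep n (x i) / d : ℕ) : ZMod m)) ∧
      seqIndex m (fun i => ((rep n (x i) / d : ℕ) : ZMod m)) = 2 :=
  descend_counterexample_general n hn x hx hind d hd m hm
end

section
/- Let k be a prime and let h_1, h_2 be integers coprime to k. If s(h_1, k) = s(h_2, k), then h_1 ≡ h_2 (mod k) or h_1 ≡ h̄_2 (mod k), where h̄_2 denotes an integer with h_2·h̄_2 ≡ 1 (mod k). -/
/-!
`N(h) = 12k·s(h, k)` is an integer, and for `h` prime to `k` it satisfies the classical
congruence `h·N(h) ≡ h² + 1 (mod k)`. This comes from `∑ (hr mod k)² = ∑ r² - k²`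
(multiplication by `h` permutes the residues mod `k`): expanding `hr mod k = hr - k⌊hr/k⌋` and
cancelling `k` gives `12h·∑ r⌊hr/k⌋ ≡ h² - 1 (mod k)`. If `s(h₁, k) = s(h₂, k)` then
`N(h₁) = N(h₂)`, and eliminating `N` between the two congruences gives
`k ∣ (h₂ - h₁)(1 - h₂h₁)`; for prime `k` one of the two factors is divisible by `k`.
-/

open Finset

/-- The classical Dedekind sum `s(h, k) = ∑_{r=1}^{k} (r/k)(hr/k − ⌊hr/k⌋ − 1/2)`. -/
def dedekindS (h : ℤ) (k : ℕ) : ℚ :=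
  ∑ r ∈ Finset.Icc 1 k,
    (r : ℚ) / k * ((h : ℚ) * r / k - ⌊(h : ℚ) * r / k⌋ - 1 / 2)

/-- The Dedekind-type sum `t(h, k) = ∑_{1 ≤ r ≤ k, gcd(r,k)=1} (r/k)(hr/k − ⌊hr/k⌋ − 1/2)`. -/
def dedekindT (h : ℤ) (k : ℕ) : ℚ :=
  ∑ r ∈ (Finset.Icc 1 k).filter (fun r => Nat.gcd r k = 1),
    (r : ℚ) / k * ((h : ℚ) * r / k - ⌊(h : ℚ) * r / k⌋ - 1 / 2)

theorem sum_Icc_one_add_eq_sum_range_add {M : Type*} [AddCommMonoid M] (k : ℕ) (f : ℕ → M) :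
    ∑ r ∈ Icc 1 k, f r + f 0 = ∑ r ∈ range k, f r + f k := by
  have hrange : range (k + 1) = insert 0 (Icc 1 k) := by
    ext r
    simp only [mem_range, mem_insert, mem_Icc]
    omega
  rw [← sum_range_succ, hrange, sum_insert (by simp), add_comm]

theorem six_mul_sum_Icc_sq {R : Type*} [CommSemiring R] (k : ℕ) :
    6 * ∑ r ∈ Icc 1 k, (r : R) ^ 2 = k * (k + 1) * (2 * k + 1) := by
  induction k with
  | zero => simp
  | succ n ih =>
    rw [sum_Icc_succ_top (by omega), mul_add, ih]
    push_cast
    ring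

theorem two_mul_sum_Icc_id {R : Type*} [CommSemiring R] (k : ℕ) :
    2 * ∑ r ∈ Icc 1 k, (r : R) = k * (k + 1) := by
  induction k with
  | zero => simp
  | succ n ih =>
    rw [sum_Icc_succ_top (by omega), mul_add, ih]
    push_cast
    ring

theorem sum_range_eq_sum_zmod {M : Type*} [AddCommMonoid M] (k : ℕ) [NeZero k]
    (g : ZMod k → M) : ∑ r ∈ range k, g r = ∑ x : ZMod k, g x :=
  sum_nbij' (fun r => (r : ZMod k)) ZMod.val (fun _ _ => mem_univ _)
    (fun x _ => mem_range.mpr (ZMod.val_lt x))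
    (fun _ hr => ZMod.val_cast_of_lt (mem_range.mp hr)) (fun x _ => ZMod.natCast_zmod_val x)
    (fun _ _ => rfl)

theorem sum_range_comp_mul_emod {M : Type*} [AddCommMonoid M] {k : ℕ} [NeZero k] {h : ℤ}
    (hh : IsCoprime h k) (f : ℤ → M) :
    ∑ r ∈ range k, f (h * r % k) = ∑ r ∈ range k, f r := by
  have hunit : IsUnit (h : ZMod k) := IsUnit.of_mul_eq_one _ (ZMod.coe_int_mul_inv_eq_one hh)
  calc ∑ r ∈ range k, f (h * r % k)
      = ∑ x : ZMod k, f ((h : ZMod k) * x).val := by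
        rw [← sum_range_eq_sum_zmod]
        refine sum_congr rfl fun r _ => ?_
        have hcast : (h : ZMod k) * r = ((h * r : ℤ) : ZMod k) := by push_cast; rfl
        rw [hcast, ZMod.val_intCast]
    _ = ∑ x : ZMod k, f x.val :=
        Equiv.sum_comp (Units.mulLeft hunit.unit) fun x : ZMod k => f x.val
    _ = ∑ r ∈ range k, f r := by
        rw [← sum_range_eq_sum_zmod]
        refine sum_congr rfl fun r hr => ?_
        rw [ZMod.val_cast_of_lt (mem_range.mp hr)]

theorem sum_Icc_sq_mul_emod {k : ℕ} [NeZero k] {h : ℤ} (hh : IsCoprime h k) :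
    ∑ r ∈ Icc 1 k, (h * r % k) ^ 2 = ∑ r ∈ Icc 1 k, (r : ℤ) ^ 2 - k ^ 2 := by
  have hsq := sum_Icc_one_add_eq_sum_range_add k fun r => (r : ℤ) ^ 2
  have hmod := sum_Icc_one_add_eq_sum_range_add k fun r => (h * r % k) ^ 2
  simp only [Nat.cast_zero, mul_zero, Int.zero_emod, Int.mul_emod_left] at hsq hmod
  rw [sum_range_comp_mul_emod hh (· ^ 2)] at hmod
  linear_combination hmod - hsq

def weightedFloorSum (h : ℤ) (k : ℕ) : ℤ := ∑ r ∈ Icc 1 k, r * (h * r / k)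

theorem twelve_mul_weightedFloorSum_modEq {k : ℕ} [NeZero k] {h : ℤ} (hh : IsCoprime h k) :
    12 * h * weightedFloorSum h k ≡ h ^ 2 - 1 [ZMOD k] := by
  set W := ∑ r ∈ Icc 1 k, (h * r / k) ^ 2
  have hexpand : ∑ r ∈ Icc 1 k, (h * r % k) ^ 2
      = h ^ 2 * ∑ r ∈ Icc 1 k, (r : ℤ) ^ 2 - 2 * h * k * weightedFloorSum h k
          + k ^ 2 * W := by
    simp only [weightedFloorSum, W, mul_sum, ← sum_sub_distrib, ← sum_add_distrib]
    refine sum_congr rfl fun r _ => ?_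
    rw [Int.emod_def]
    ring
  have hk : (k : ℤ) ≠ 0 := by exact_mod_cast NeZero.ne k
  -- Equate the two expressions for `∑ (hr mod k)²` and cancel the common factor `k`.
  have hquot : (h ^ 2 - 1) * (k + 1) * (2 * k + 1)
      = 12 * h * weightedFloorSum h k - 6 * k * W - 6 * k :=
    mul_left_cancel₀ hk (by
      linear_combination 6 * sum_Icc_sq_mul_emod hh - 6 * hexpand
        - (h ^ 2 - 1) * six_mul_sum_Icc_sq (R := ℤ) k)
  refine (Int.modEq_iff_dvd.mpr ⟨(h ^ 2 - 1) * (2 * k + 3) + 6 * W + 6, ?_⟩).symm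
  linear_combination -hquot

def dedekindNum (h : ℤ) (k : ℕ) : ℤ :=
  2 * h * (k + 1) * (2 * k + 1) - 3 * k * (k + 1) - 12 * weightedFloorSum h k

theorem twelve_mul_dedekindS {k : ℕ} (hk : k ≠ 0) (h : ℤ) :
    12 * k * dedekindS h k = dedekindNum h k := by
  have hfloor : ∀ r : ℕ, ⌊(h : ℚ) * r / k⌋ = h * r / k := fun r => by
    exact_mod_cast Rat.floor_intCast_div_natCast (h * r) k
  have hkq : (k : ℚ) ≠ 0 := by exact_mod_cast hk
  have hsum : (k : ℚ) ^ 2 * dedekindS h k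
      = h * ∑ r ∈ Icc 1 k, (r : ℚ) ^ 2 - k * (weightedFloorSum h k : ℚ)
        - k / 2 * ∑ r ∈ Icc 1 k, (r : ℚ) := by
    simp only [dedekindS, weightedFloorSum, hfloor]
    push_cast
    simp only [mul_sum, ← sum_sub_distrib]
    refine sum_congr rfl fun r _ => ?_
    field_simp
  refine mul_left_cancel₀ hkq ?_
  simp only [dedekindNum]
  push_cast
  linear_combination 12 * hsum + 2 * h * six_mul_sum_Icc_sq (R := ℚ) k
    - 3 * k * two_mul_sum_Icc_id (R := ℚ) k

theorem mul_dedekindNum_modEq {k : ℕ} [NeZero k] {h : ℤ} (hh : IsCoprime h k) :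
    h * dedekindNum h k ≡ h ^ 2 + 1 [ZMOD k] := by
  have hk : (k : ℤ) ≡ 0 [ZMOD k] := Int.modEq_zero_iff_dvd.mpr dvd_rfl
  calc h * dedekindNum h k
      = 2 * h ^ 2 * (k + 1) * (2 * k + 1) - 3 * h * k * (k + 1)
          - 12 * h * weightedFloorSum h k := by
        rw [dedekindNum]; ring
    _ ≡ 2 * h ^ 2 * (0 + 1) * (2 * 0 + 1) - 3 * h * 0 * (0 + 1) - (h ^ 2 - 1) [ZMOD k] := by
        gcongr
        exact twelve_mul_weightedFloorSum_modEq hh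
    _ = h ^ 2 + 1 := by ring

/-- For a prime `k` and `h₁, h₂` coprime to `k`, if `s(h₁, k) = s(h₂, k)` then
`h₁ ≡ h₂ (mod k)` or `h₁ ≡ h̄₂ (mod k)` where `h₂·h̄₂ ≡ 1 (mod k)`. -/
theorem dedekindS_inj (k : ℕ) (hk : k.Prime) (h₁ h₂ : ℤ)
    (hcop₁ : Int.gcd h₁ (k : ℤ) = 1) (hcop₂ : Int.gcd h₂ (k : ℤ) = 1)
    (hs : dedekindS h₁ k = dedekindS h₂ k) :
    h₁ ≡ h₂ [ZMOD (k : ℤ)] ∨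
      ∃ hbar₂ : ℤ, h₂ * hbar₂ ≡ 1 [ZMOD (k : ℤ)] ∧ h₁ ≡ hbar₂ [ZMOD (k : ℤ)] := by
  have : NeZero k := ⟨hk.ne_zero⟩
  have hnum : dedekindNum h₁ k = dedekindNum h₂ k := by
    have h12 := twelve_mul_dedekindS hk.ne_zero h₁
    rwa [hs, twelve_mul_dedekindS hk.ne_zero h₂, Int.cast_inj, eq_comm] at h12
  have e₁ := mul_dedekindNum_modEq (Int.isCoprime_iff_gcd_eq_one.mpr hcop₁)
  have e₂ := mul_dedekindNum_modEq (Int.isCoprime_iff_gcd_eq_one.mpr hcop₂)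
  rw [hnum] at e₁
  have hdvd : (k : ℤ) ∣ (h₂ - h₁) * (1 - h₂ * h₁) := by
    convert ((e₁.mul_left h₂).sub (e₂.mul_left h₁)).dvd using 1
    ring
  rcases (Nat.prime_iff_prime_int.mp hk).dvd_or_dvd hdvd with hd | hd
  · exact Or.inl (Int.modEq_iff_dvd.mpr hd)
  · exact Or.inr ⟨h₁, Int.modEq_iff_dvd.mpr hd, rfl⟩
end
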